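/- Let d ≥ 1 and α > 0. Let Λ_L = {0, 1, …, L−1}^d ⊂ ℤ^d be the cube of side L. Then the limit f(α) = lim_{L→∞} (1/L^d) log Z(Λ_L) exists and is a finite real number. -/

import Mathlib

open scoped BigOperators

/-- Squared Euclidean distance between two points of `ℤ^d`. -/
noncomputable def distSq {d : ℕ} (x y : Fin d → ℤ) : ℝ :=
  ∑ i, ((x i - y i : ℤ) : ℝ) ^ 2

/-- Gaussian weight of a permutation of a finite box `Λ ⊂ ℤ^d`. -/
noncomputable def permWeight {d : ℕ} (α : ℝ) (Λ : Finset (Fin d → ℤ))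
    (π : Equiv.Perm {x : Fin d → ℤ // x ∈ Λ}) : ℝ :=
  ∏ x : {x : Fin d → ℤ // x ∈ Λ}, Real.exp (-α * distSq x.1 (π x).1)

/-- Partition function `Z(Λ)`. -/
noncomputable def partitionZ {d : ℕ} (α : ℝ) (Λ : Finset (Fin d → ℤ)) : ℝ :=
  ∑ π : Equiv.Perm {x : Fin d → ℤ // x ∈ Λ}, permWeight α Λ π

/-- Length of the cycle of `π` containing the origin (`1` if `0 ∉ Λ`). -/
noncomputable def cycleLen {d : ℕ} (Λ : Finset (Fin d → ℤ))
    (π : Equiv.Perm {x : Fin d → ℤ // x ∈ Λ}) : ℕ :=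
  Function.minimalPeriod (⇑(Equiv.Perm.ofSubtype π)) (0 : Fin d → ℤ)

/-- Gibbs probability that the cycle through the origin has length `k`. -/
noncomputable def cycleProb {d : ℕ} (α : ℝ) (Λ : Finset (Fin d → ℤ)) (k : ℕ) : ℝ :=
  (∑ π : Equiv.Perm {x : Fin d → ℤ // x ∈ Λ},
    if cycleLen Λ π = k then permWeight α Λ π else 0) / partitionZ α Λ

/-- The centered cube `{-L, …, L}^d` in `ℤ^d`; it contains the origin. -/
noncomputable def centeredCube (d : ℕ) (L : ℕ) : Finset (Fin d → ℤ) :=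
  Fintype.piFinset fun _ : Fin d => Finset.Icc (-(L : ℤ)) (L : ℤ)

/-- The cube `{0, 1, …, L-1}^d ⊂ ℤ^d` of side `L`. -/
noncomputable def boxCube (d : ℕ) (L : ℕ) : Finset (Fin d → ℤ) :=
  Fintype.piFinset fun _ : Fin d => Finset.Ico (0 : ℤ) (L : ℤ)

/-! ### Auxiliary lemmas -/

section AuxPW

variable {d : ℕ} {α : ℝ}

lemma permWeight_nonneg (Λ : Finset (Fin d → ℤ)) (π : Equiv.Perm {x : Fin d → ℤ // x ∈ Λ}) :
    0 ≤ permWeight α Λ π :=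
  Finset.prod_nonneg fun _ _ => (Real.exp_pos _).le

lemma permWeight_one (Λ : Finset (Fin d → ℤ)) : permWeight α Λ 1 = 1 := by
  unfold permWeight
  apply Finset.prod_eq_one
  intro x _
  simp [distSq]

lemma one_le_partitionZ (Λ : Finset (Fin d → ℤ)) : 1 ≤ partitionZ α Λ := by
  have := Finset.single_le_sum (f := permWeight α Λ)
    (fun π _ => permWeight_nonneg Λ π) (Finset.mem_univ 1)
  rw [permWeight_one] at this
  exact this

lemma partitionZ_pos (Λ : Finset (Fin d → ℤ)) : 0 < partitionZ α Λ :=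
  lt_of_lt_of_le one_pos (one_le_partitionZ Λ)

lemma partitionZ_nonneg (Λ : Finset (Fin d → ℤ)) : 0 ≤ partitionZ α Λ :=
  (partitionZ_pos Λ).le

lemma distSq_add_right (v a b : Fin d → ℤ) : distSq (a + v) (b + v) = distSq a b := by
  unfold distSq
  apply Finset.sum_congr rfl
  intro i _
  have : (a + v) i - (b + v) i = a i - b i := by simp [Pi.add_apply]
  rw [this]

lemma partitionZ_image_add (α : ℝ) (Λ : Finset (Fin d → ℤ)) (v : Fin d → ℤ) :
    partitionZ α (Λ.image (· + v)) = partitionZ α Λ := by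
  classical
  let e : {x : Fin d → ℤ // x ∈ Λ} ≃ {x : Fin d → ℤ // x ∈ Λ.image (· + v)} :=
    { toFun := fun x => ⟨x.1 + v, Finset.mem_image_of_mem _ x.2⟩
      invFun := fun y => ⟨y.1 - v, by
        rcases Finset.mem_image.1 y.2 with ⟨z, hz, hzv⟩
        have : y.1 - v = z := by rw [← hzv]; abel
        rwa [this]⟩
      left_inv := fun x => by ext : 1; show x.1 + v - v = x.1; abel
      right_inv := fun y => by ext : 1; show y.1 - v + v = y.1; abel }
  rw [partitionZ, partitionZ, ← Equiv.sum_comp e.permCongr (permWeight α (Λ.image (· + v)))]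
  apply Finset.sum_congr rfl
  intro π _
  unfold permWeight
  rw [← Equiv.prod_comp e]
  apply Finset.prod_congr rfl
  intro x _
  have h1 : (e.permCongr π) (e x) = e (π x) := by
    simp [Equiv.permCongr_apply]
  rw [h1]
  show Real.exp (-α * distSq (x.1 + v) ((π x).1 + v)) = _
  rw [distSq_add_right]

/-- Equivalence between a disjoint union of finsets (as subtypes) and the union. -/
def unionEquiv {γ : Type*} [DecidableEq γ] {A B : Finset γ} (h : Disjoint A B) :
    ({x : γ // x ∈ A} ⊕ {x : γ // x ∈ B}) ≃ {x : γ // x ∈ A ∪ B} where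
  toFun := Sum.elim (fun a => ⟨a.1, Finset.mem_union_left _ a.2⟩)
    (fun b => ⟨b.1, Finset.mem_union_right _ b.2⟩)
  invFun x := if hx : x.1 ∈ A then Sum.inl ⟨x.1, hx⟩
    else Sum.inr ⟨x.1, (Finset.mem_union.1 x.2).resolve_left hx⟩
  left_inv := by
    rintro (a | b)
    · simp
    · have hb : b.1 ∉ A := Finset.disjoint_right.1 h b.2
      simp [hb]
  right_inv := by
    rintro ⟨x, hx⟩
    by_cases h' : x ∈ A <;> simp [h']

lemma permWeight_sumCongr (α : ℝ) {A B : Finset (Fin d → ℤ)} (h : Disjoint A B)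
    (p : Equiv.Perm {x : Fin d → ℤ // x ∈ A}) (q : Equiv.Perm {x : Fin d → ℤ // x ∈ B}) :
    permWeight α (A ∪ B) ((unionEquiv h).permCongr (Equiv.Perm.sumCongrHom _ _ (p, q)))
      = permWeight α A p * permWeight α B q := by
  unfold permWeight
  rw [← Equiv.prod_comp (unionEquiv h), Fintype.prod_sum_type]
  refine congrArg₂ (· * ·) (Finset.prod_congr rfl fun a _ => ?_)
    (Finset.prod_congr rfl fun b _ => ?_)
  · have h1 : ((unionEquiv h).permCongr (Equiv.Perm.sumCongrHom _ _ (p, q)))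
        ((unionEquiv h) (Sum.inl a)) = (unionEquiv h) (Sum.inl (p a)) := by
      simp only [Equiv.permCongr_apply, Equiv.symm_apply_apply,
        Equiv.Perm.sumCongrHom_apply, Equiv.sumCongr_apply, Sum.map_inl]
    rw [h1]
    rfl
  · have h1 : ((unionEquiv h).permCongr (Equiv.Perm.sumCongrHom _ _ (p, q)))
        ((unionEquiv h) (Sum.inr b)) = (unionEquiv h) (Sum.inr (q b)) := by
      simp only [Equiv.permCongr_apply, Equiv.symm_apply_apply,
        Equiv.Perm.sumCongrHom_apply, Equiv.sumCongr_apply, Sum.map_inr]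
    rw [h1]
    rfl

lemma partitionZ_union (α : ℝ) {A B : Finset (Fin d → ℤ)} (h : Disjoint A B) :
    partitionZ α A * partitionZ α B ≤ partitionZ α (A ∪ B) := by
  classical
  have hinj : Function.Injective (fun pq :
      Equiv.Perm {x : Fin d → ℤ // x ∈ A} × Equiv.Perm {x : Fin d → ℤ // x ∈ B} =>
      (unionEquiv h).permCongr (Equiv.Perm.sumCongrHom _ _ pq)) := by
    intro pq pq' hpq
    exact Equiv.Perm.sumCongrHom_injective ((unionEquiv h).permCongr.injective hpq)
  calc partitionZ α A * partitionZ α B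
      = ∑ pq : Equiv.Perm {x : Fin d → ℤ // x ∈ A} × Equiv.Perm {x : Fin d → ℤ // x ∈ B},
          permWeight α (A ∪ B) ((unionEquiv h).permCongr (Equiv.Perm.sumCongrHom _ _ pq)) := by
        rw [partitionZ, partitionZ, Finset.sum_mul_sum, Fintype.sum_prod_type]
        exact Finset.sum_congr rfl fun p _ => Finset.sum_congr rfl fun q _ =>
          (permWeight_sumCongr α h p q).symm
    _ = ∑ π ∈ Finset.univ.image (fun pq :
          Equiv.Perm {x : Fin d → ℤ // x ∈ A} × Equiv.Perm {x : Fin d → ℤ // x ∈ B} =>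
          (unionEquiv h).permCongr (Equiv.Perm.sumCongrHom _ _ pq)),
          permWeight α (A ∪ B) π := by
        rw [Finset.sum_image (fun a _ b _ hab => hinj hab)]
    _ ≤ partitionZ α (A ∪ B) :=
        Finset.sum_le_sum_of_subset_of_nonneg (Finset.subset_univ _)
          (fun π _ _ => permWeight_nonneg _ π)

lemma partitionZ_mono (α : ℝ) {A B : Finset (Fin d → ℤ)} (h : A ⊆ B) :
    partitionZ α A ≤ partitionZ α B := by
  have hd : Disjoint A (B \ A) := Finset.disjoint_sdiff
  have hu : A ∪ (B \ A) = B := Finset.union_sdiff_of_subset h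
  calc partitionZ α A = partitionZ α A * 1 := (mul_one _).symm
    _ ≤ partitionZ α A * partitionZ α (B \ A) := by
        apply mul_le_mul_of_nonneg_left (one_le_partitionZ _) (partitionZ_nonneg _)
    _ ≤ partitionZ α (A ∪ (B \ A)) := partitionZ_union α hd
    _ = partitionZ α B := by rw [hu]

lemma partitionZ_blocks (α : ℝ) {ι : Type*} [DecidableEq ι] (s : Finset ι)
    (B : ι → Finset (Fin d → ℤ)) (hd : Set.PairwiseDisjoint ↑s B) :
    ∏ j ∈ s, partitionZ α (B j) ≤ partitionZ α (s.biUnion B) := by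
  classical
  induction s using Finset.cons_induction with
  | empty => simpa using one_le_partitionZ (α := α) (∅ : Finset (Fin d → ℤ))
  | cons a s ha ih =>
    have hd' : Set.PairwiseDisjoint ↑s B :=
      hd.subset (by simp [Finset.coe_cons, Set.subset_insert])
    have hdisj : Disjoint (B a) (s.biUnion B) := by
      rw [Finset.disjoint_biUnion_right]
      intro j hj
      exact hd (by simp) (by simp [hj]) (by rintro rfl; exact ha hj)
    rw [Finset.prod_cons, Finset.cons_eq_insert, Finset.biUnion_insert]
    calc partitionZ α (B a) * ∏ j ∈ s, partitionZ α (B j)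
        ≤ partitionZ α (B a) * partitionZ α (s.biUnion B) := by
          apply mul_le_mul_of_nonneg_left (ih hd') (partitionZ_nonneg _)
      _ ≤ partitionZ α (B a ∪ s.biUnion B) := partitionZ_union α hdisj

end AuxPW

section Gauss

/-- One-dimensional Gaussian sum over `ℤ`. -/
noncomputable def gSumZ (α : ℝ) : ℝ := ∑' n : ℤ, Real.exp (-α * (n : ℝ) ^ 2)

lemma hnat_gauss {α : ℝ} (hα : 0 < α) :
    Summable fun n : ℕ => Real.exp (-α * (n : ℝ) ^ 2) := by
  have hgeom : Summable fun n : ℕ => Real.exp (-α) ^ n :=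
    summable_geometric_of_lt_one (Real.exp_pos _).le
      (Real.exp_lt_one_iff.2 (by linarith))
  apply Summable.of_nonneg_of_le (fun n => (Real.exp_pos _).le) (fun n => ?_) hgeom
  rw [← Real.exp_nat_mul]
  apply Real.exp_le_exp.2
  have hn : (n : ℝ) ≤ (n : ℝ) ^ 2 := by
    exact_mod_cast Nat.le_self_pow (by norm_num : (2:ℕ) ≠ 0) n
  nlinarith

lemma summable_gSumZ {α : ℝ} (hα : 0 < α) :
    Summable fun n : ℤ => Real.exp (-α * (n : ℝ) ^ 2) := by
  refine Summable.of_nat_of_neg ?_ ?_ <;> · simpa using hnat_gauss hα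

lemma one_le_gSumZ {α : ℝ} (hα : 0 < α) : 1 ≤ gSumZ α := by
  have := Summable.le_tsum (summable_gSumZ hα) 0 (fun j _ => (Real.exp_pos _).le)
  simpa [gSumZ] using this

lemma gaussRow_le {α : ℝ} (hα : 0 < α) (c : ℤ) (s : Finset ℤ) :
    ∑ t ∈ s, Real.exp (-α * ((c - t : ℤ) : ℝ) ^ 2) ≤ gSumZ α := by
  have hinj : ∀ a ∈ s, ∀ b ∈ s, c - a = c - b → a = b := fun a _ b _ hab => by omega
  calc ∑ t ∈ s, Real.exp (-α * ((c - t : ℤ) : ℝ) ^ 2)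
      = ∑ u ∈ s.image (fun t => c - t), Real.exp (-α * (u : ℝ) ^ 2) :=
        (Finset.sum_image (f := fun u : ℤ => Real.exp (-α * (u : ℝ) ^ 2)) (g := fun t => c - t) hinj).symm
    _ ≤ gSumZ α := (summable_gSumZ hα).sum_le_tsum _ (fun i _ => (Real.exp_pos _).le)

lemma partitionZ_boxCube_le {d : ℕ} {α : ℝ} (hα : 0 < α) (L : ℕ) :
    partitionZ α (boxCube d L) ≤ (gSumZ α ^ d) ^ L ^ d := by
  classical
  set Λ := boxCube d L with hΛ
  have hrow : ∀ x : Fin d → ℤ,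
      ∑ y ∈ Λ, Real.exp (-α * distSq x y) ≤ gSumZ α ^ d := by
    intro x
    have hsplit : ∀ y : Fin d → ℤ, Real.exp (-α * distSq x y)
        = ∏ i, Real.exp (-α * ((x i - y i : ℤ) : ℝ) ^ 2) := by
      intro y
      rw [← Real.exp_sum]
      congr 1
      rw [distSq, Finset.mul_sum]
    calc ∑ y ∈ Λ, Real.exp (-α * distSq x y)
        = ∑ y ∈ Λ, ∏ i, Real.exp (-α * ((x i - y i : ℤ) : ℝ) ^ 2) :=
          Finset.sum_congr rfl fun y _ => hsplit y
      _ = ∏ i, ∑ t ∈ Finset.Ico (0 : ℤ) (L : ℤ), Real.exp (-α * ((x i - t : ℤ) : ℝ) ^ 2) := by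
          rw [hΛ, boxCube, Finset.prod_univ_sum]
      _ ≤ ∏ _i : Fin d, gSumZ α :=
          Finset.prod_le_prod (fun i _ => Finset.sum_nonneg fun t _ => (Real.exp_pos _).le)
            (fun i _ => gaussRow_le hα _ _)
      _ = gSumZ α ^ d := by simp
  have hcard : Fintype.card {x : Fin d → ℤ // x ∈ Λ} = L ^ d := by
    rw [Fintype.card_coe, hΛ, boxCube, Fintype.card_piFinset]
    simp
  calc partitionZ α Λ
      ≤ ∑ g ∈ (Finset.univ : Finset ({x : Fin d → ℤ // x ∈ Λ} → {x : Fin d → ℤ // x ∈ Λ})),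
          ∏ x, Real.exp (-α * distSq x.1 (g x).1) := by
        rw [partitionZ]
        have himg : ∑ π : Equiv.Perm {x : Fin d → ℤ // x ∈ Λ}, permWeight α Λ π
            = ∑ g ∈ Finset.univ.image (fun π : Equiv.Perm {x : Fin d → ℤ // x ∈ Λ} => ⇑π),
                ∏ x, Real.exp (-α * distSq x.1 (g x).1) := by
          rw [Finset.sum_image (fun a _ b _ hab => Equiv.coe_fn_injective hab)]
          rfl
        rw [himg]
        exact Finset.sum_le_sum_of_subset_of_nonneg (Finset.subset_univ _)
          (fun g _ _ => Finset.prod_nonneg fun x _ => (Real.exp_pos _).le)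
    _ = ∏ x : {x : Fin d → ℤ // x ∈ Λ}, ∑ y : {x : Fin d → ℤ // x ∈ Λ},
          Real.exp (-α * distSq x.1 y.1) := by
        rw [Finset.prod_univ_sum, Fintype.piFinset_univ]
    _ ≤ ∏ _x : {x : Fin d → ℤ // x ∈ Λ}, gSumZ α ^ d := by
        apply Finset.prod_le_prod (fun x _ => Finset.sum_nonneg fun y _ => (Real.exp_pos _).le)
        intro x _
        calc ∑ y : {x : Fin d → ℤ // x ∈ Λ}, Real.exp (-α * distSq x.1 y.1)
            = ∑ y ∈ Λ, Real.exp (-α * distSq x.1 y) :=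
              Finset.sum_coe_sort Λ (fun z => Real.exp (-α * distSq x.1 z))
          _ ≤ gSumZ α ^ d := hrow x.1
    _ = (gSumZ α ^ d) ^ L ^ d := by rw [Finset.prod_const, Finset.card_univ, hcard]

end Gauss

section Blocks

variable {d : ℕ}

lemma key_pow_le (α : ℝ) {m : ℕ} (hm : 1 ≤ m) (L : ℕ) :
    partitionZ α (boxCube d m) ^ ((L / m) ^ d) ≤ partitionZ α (boxCube d L) := by
  classical
  set q := L / m with hq
  set B : (Fin d → ℕ) → Finset (Fin d → ℤ) :=
    fun j => (boxCube d m).image (· + fun i => (m : ℤ) * j i) with hB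
  set J : Finset (Fin d → ℕ) := Fintype.piFinset fun _ : Fin d => Finset.range q with hJ
  have hmem : ∀ j : Fin d → ℕ, ∀ x ∈ B j, ∀ i,
      (m : ℤ) * j i ≤ x i ∧ x i < (m : ℤ) * j i + m := by
    intro j x hx i
    rcases Finset.mem_image.1 hx with ⟨y, hy, rfl⟩
    simp only [boxCube, Fintype.mem_piFinset, Finset.mem_Ico] at hy
    obtain ⟨h1, h2⟩ := hy i
    have : (y + fun i => (m : ℤ) * j i) i = y i + (m : ℤ) * j i := rfl
    rw [this]
    omega
  have hdisj : Set.PairwiseDisjoint (↑J : Set (Fin d → ℕ)) B := by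
    intro j hj j' hj' hne
    refine Finset.disjoint_left.2 fun x hxj hxj' => ?_
    obtain ⟨i, hi⟩ : ∃ i, j i ≠ j' i := by
      by_contra hcon
      push_neg at hcon
      exact hne (funext hcon)
    obtain ⟨ha1, ha2⟩ := hmem j x hxj i
    obtain ⟨hb1, hb2⟩ := hmem j' x hxj' i
    rcases lt_or_gt_of_ne hi with h | h
    · have h3 : (j i : ℤ) + 1 ≤ (j' i : ℤ) := by exact_mod_cast h
      have h4 : (m : ℤ) * (j i + 1) ≤ (m : ℤ) * j' i :=
        mul_le_mul_of_nonneg_left h3 (by positivity)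
      have e : (m : ℤ) * ((j i : ℤ) + 1) = (m : ℤ) * j i + m := by ring
      linarith
    · have h3 : (j' i : ℤ) + 1 ≤ (j i : ℤ) := by exact_mod_cast h
      have h4 : (m : ℤ) * (j' i + 1) ≤ (m : ℤ) * j i :=
        mul_le_mul_of_nonneg_left h3 (by positivity)
      have e : (m : ℤ) * ((j' i : ℤ) + 1) = (m : ℤ) * j' i + m := by ring
      linarith
  have hsub : ∀ j ∈ J, B j ⊆ boxCube d L := by
    intro j hj x hx
    have hx' := hmem j x hx
    have hjq : ∀ i, j i < q := fun i => Finset.mem_range.1 (Fintype.mem_piFinset.1 hj i)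
    simp only [boxCube, Fintype.mem_piFinset, Finset.mem_Ico]
    intro i
    obtain ⟨h1, h2⟩ := hx' i
    have h5 : ((j i : ℤ) + 1) ≤ (q : ℤ) := by exact_mod_cast hjq i
    have h6 : (m : ℤ) * ((j i : ℤ) + 1) ≤ (m : ℤ) * q :=
      mul_le_mul_of_nonneg_left h5 (by positivity)
    have h7 : (q : ℤ) * m ≤ (L : ℤ) := by exact_mod_cast Nat.div_mul_le_self L m
    have h8 : (0 : ℤ) ≤ (m : ℤ) * j i := by positivity
    have e : (m : ℤ) * ((j i : ℤ) + 1) = (m : ℤ) * j i + m := by ring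
    constructor
    · linarith
    · nlinarith
  have hBZ : ∀ j, partitionZ α (B j) = partitionZ α (boxCube d m) := fun j =>
    partitionZ_image_add α _ _
  have hcard : J.card = q ^ d := by
    rw [hJ, Fintype.card_piFinset]
    simp
  have hprod : ∏ j ∈ J, partitionZ α (B j) = partitionZ α (boxCube d m) ^ q ^ d := by
    rw [Finset.prod_congr rfl fun j _ => hBZ j, Finset.prod_const, hcard]
  calc partitionZ α (boxCube d m) ^ q ^ d
      = ∏ j ∈ J, partitionZ α (B j) := hprod.symm
    _ ≤ partitionZ α (J.biUnion B) := partitionZ_blocks α J B hdisj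
    _ ≤ partitionZ α (boxCube d L) := partitionZ_mono α (Finset.biUnion_subset.2 hsub)

end Blocks

open Filter in
/-- For `d ≥ 1` and `α > 0`, the thermodynamic potential
`f(α) = lim_{L→∞} (1/L^d) log Z(Λ_L)` exists and is a finite real number. -/
theorem thermodynamic_potential_exists {d : ℕ} (hd : 1 ≤ d) {α : ℝ} (hα : 0 < α) :
    ∃ f : ℝ, Tendsto
      (fun L : ℕ => (1 / ((L : ℝ) ^ d)) * Real.log (partitionZ α (boxCube d L)))
      atTop (nhds f) := by
  classical
  set b : ℕ → ℝ := fun L => Real.log (partitionZ α (boxCube d L)) with hbdef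
  set C : ℝ := (d : ℝ) * Real.log (gSumZ α) with hCdef
  have hC0 : 0 ≤ C := mul_nonneg (by positivity) (Real.log_nonneg (one_le_gSumZ hα))
  have hb0 : ∀ L, 0 ≤ b L := fun L => Real.log_nonneg (one_le_partitionZ _)
  have hbC : ∀ L : ℕ, b L ≤ (L : ℝ) ^ d * C := by
    intro L
    have h1 := Real.log_le_log (partitionZ_pos (α := α) (boxCube d L))
      (partitionZ_boxCube_le hα L)
    rw [Real.log_pow, Real.log_pow] at h1
    calc b L ≤ (L ^ d : ℕ) * ((d : ℕ) * Real.log (gSumZ α)) := h1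
      _ = (L : ℝ) ^ d * C := by push_cast [hCdef]; ring
  have hkey : ∀ m L : ℕ, 1 ≤ m → ((L / m : ℕ) : ℝ) ^ d * b m ≤ b L := by
    intro m L hm
    have h1 := key_pow_le (d := d) α hm L
    have h2 := Real.log_le_log (pow_pos (partitionZ_pos (boxCube d m)) _) h1
    rw [Real.log_pow] at h2
    calc ((L / m : ℕ) : ℝ) ^ d * b m = (((L / m) ^ d : ℕ) : ℝ) * b m := by push_cast; ring
      _ ≤ b L := h2
  have huC : ∀ L : ℕ, 1 ≤ L → (1 / ((L : ℝ) ^ d)) * b L ≤ C := by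
    intro L hL
    have hLpos : (0 : ℝ) < (L : ℝ) ^ d := by
      have : (0 : ℝ) < (L : ℝ) := by exact_mod_cast hL
      positivity
    rw [one_div_mul_eq_div, div_le_iff₀ hLpos]
    calc b L ≤ (L : ℝ) ^ d * C := hbC L
      _ = C * (L : ℝ) ^ d := mul_comm _ _
  set S : Set ℝ := Set.range (fun n : ℕ => (1 / (((n + 1 : ℕ) : ℝ) ^ d)) * b (n + 1))
    with hSdef
  have hSne : S.Nonempty := ⟨_, 0, rfl⟩
  have hSbdd : BddAbove S := by
    refine ⟨C, ?_⟩
    rintro y ⟨n, rfl⟩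
    exact huC (n + 1) (by omega)
  refine ⟨sSup S, Metric.tendsto_atTop.2 ?_⟩
  intro ε hε
  set f := sSup S with hfdef
  obtain ⟨y, ⟨n, rfl⟩, hy⟩ := exists_lt_of_lt_csSup hSne
    (show f - ε / 2 < f by linarith)
  set m : ℕ := n + 1 with hmdef
  have hm1 : 1 ≤ m := by omega
  set M : ℝ := (m : ℝ) with hMdef
  have hMpos : (0 : ℝ) < M := by rw [hMdef]; exact_mod_cast hm1
  set um : ℝ := (1 / (M ^ d)) * b m with humdef
  have hum : f - ε / 2 < um := hy
  have hum0 : 0 ≤ um := mul_nonneg (by positivity) (hb0 m)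
  have humC : um ≤ C := huC m hm1
  obtain ⟨N₀, hN₀⟩ := exists_nat_gt (2 * ((d : ℝ) * M * C) / ε)
  refine ⟨max N₀ m, fun L hL => ?_⟩
  have hLm : m ≤ L := le_trans (le_max_right _ _) hL
  have hL1 : 1 ≤ L := le_trans hm1 hLm
  have hLN : (N₀ : ℝ) ≤ (L : ℝ) := by exact_mod_cast le_trans (le_max_left _ _) hL
  set LL : ℝ := (L : ℝ) with hLLdef
  have hLpos : (0 : ℝ) < LL := by rw [hLLdef]; exact_mod_cast hL1
  have hML : M ≤ LL := by rw [hMdef, hLLdef]; exact_mod_cast hLm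
  set q : ℕ := L / m with hqdef
  set Q : ℝ := (q : ℝ) with hQdef
  have hQ0 : 0 ≤ Q := by positivity
  have ht1 : Q * M ≤ LL := by rw [hQdef, hMdef, hLLdef]; exact_mod_cast Nat.div_mul_le_self L m
  have ht2 : LL - M ≤ Q * M := by
    have h3 : L < q * m + m := Nat.lt_div_mul_add hm1
    have h4 : (L : ℝ) < (q : ℝ) * m + m := by exact_mod_cast h3
    linarith
  have hup : (1 / (LL ^ d)) * b L ≤ f := by
    apply le_csSup hSbdd
    refine ⟨L - 1, ?_⟩
    simp only [Nat.sub_add_cancel hL1]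
    rfl
  have hkeyR : Q ^ d * b m ≤ b L := hkey m L hm1
  have h4 : ((Q * M) / LL) ^ d * um ≤ (1 / (LL ^ d)) * b L := by
    have he : ((Q * M) / LL) ^ d * um = (1 / (LL ^ d)) * (Q ^ d * b m) := by
      rw [humdef]
      field_simp
      rw [div_pow]
      field_simp
      ring
    rw [he]
    exact mul_le_mul_of_nonneg_left hkeyR (by positivity)
  have ht0 : 0 ≤ 1 - M / LL := by
    rw [sub_nonneg, div_le_one hLpos]
    exact hML
  have ht3 : 1 - M / LL ≤ (Q * M) / LL := by
    have he : 1 - M / LL = (LL - M) / LL := by field_simp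
    rw [he, div_le_div_iff₀ hLpos hLpos]
    nlinarith
  have hber : 1 - (d : ℝ) * (M / LL) ≤ (1 - M / LL) ^ d := by
    have hx : (-2 : ℝ) ≤ -(M / LL) := by
      have : M / LL ≤ 1 := by
        rw [div_le_one hLpos]
        exact hML
      linarith
    have h := one_add_mul_le_pow hx d
    calc 1 - (d : ℝ) * (M / LL) = 1 + (d : ℝ) * -(M / LL) := by ring
      _ ≤ (1 + -(M / LL)) ^ d := h
      _ = (1 - M / LL) ^ d := by ring_nf
  have hpow : (1 - M / LL) ^ d ≤ ((Q * M) / LL) ^ d := pow_le_pow_left₀ ht0 ht3 d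
  have h5 : um - ((d : ℝ) * M / LL) * C ≤ ((Q * M) / LL) ^ d * um := by
    have h6 : (1 - (d : ℝ) * (M / LL)) * um ≤ ((Q * M) / LL) ^ d * um :=
      mul_le_mul_of_nonneg_right (le_trans hber hpow) hum0
    have h8 : ((d : ℝ) * (M / LL)) * um ≤ ((d : ℝ) * M / LL) * C := by
      have he : (d : ℝ) * (M / LL) = (d : ℝ) * M / LL := by ring
      rw [he]
      exact mul_le_mul_of_nonneg_left humC (by positivity)
    have h9 : (1 - (d : ℝ) * (M / LL)) * um = um - ((d : ℝ) * (M / LL)) * um := by ring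
    rw [h9] at h6
    linarith
  have hsmall : ((d : ℝ) * M / LL) * C < ε / 2 := by
    rw [div_mul_eq_mul_div, div_lt_iff₀ hLpos]
    have h10 : 2 * ((d : ℝ) * M * C) / ε < LL := lt_of_lt_of_le hN₀ hLN
    rw [div_lt_iff₀ hε] at h10
    linarith
  have hlow : f - ε < (1 / (LL ^ d)) * b L := by
    have := le_trans h5 h4
    linarith
  have hgoal : dist ((1 / (LL ^ d)) * b L) f < ε := by
    rw [Real.dist_eq, abs_lt]
    constructor
    · linarith
    · linarith
  exact hgoal
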